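/- Let h₁, …, h_n : (A,κ) → (B,λ) and α₁, …, α_n : (B,λ) → (C,ω) be digitally continuous maps such that α_i ≃ α_{i+1} (digitally (λ,ω)-homotopic) for every i ∈ {1,…,n−1}. Then D_m(α₁∘h₁, …, α_n∘h_n) ≤ D_m(h₁,…,h_n). -/
import Mathlib


namespace DigitalTop

/-- The `c_p`-adjacency relation on `ℤ^r`: distinct points such that at most `p`
coordinates differ by exactly `1`, and all coordinates not differing by `1` are equal. -/
def cAdj (r p : ℕ) (a a' : Fin r → ℤ) : Prop :=
  a ≠ a' ∧
  ((Finset.univ.filter fun q : Fin r => |a q - a' q| = 1).card ≤ p) ∧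
  ∀ s : Fin r, |a s - a' s| ≠ 1 → a s = a' s

/-- The `2`-adjacency on the digital interval in `ℤ`. -/
def intAdj (t t' : ℤ) : Prop := |t - t'| = 1

/-- Digital `(adjA, adjB)`-continuity of `f` on `A`, mapping into `B`. -/
def DigContinuousOn {α β : Type*} (adjA : α → α → Prop) (adjB : β → β → Prop)
    (A : Set α) (B : Set β) (f : α → β) : Prop :=
  (∀ a ∈ A, f a ∈ B) ∧
  ∀ a ∈ A, ∀ a' ∈ A, adjA a a' → f a = f a' ∨ adjB (f a) (f a')

/-- `K : A × [0,z]_ℤ → B` is a digital homotopy (in `z` steps): each stage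
`K (·, t)` is digitally continuous and each track `K (a, ·)` is digitally
`(2, adjB)`-continuous on `[0,z]_ℤ`. -/
def IsDigHomotopy {α β : Type*} (adjA : α → α → Prop) (adjB : β → β → Prop)
    (A : Set α) (B : Set β) (z : ℕ) (K : α → ℤ → β) : Prop :=
  (∀ t ∈ Set.Icc (0 : ℤ) (z : ℤ), DigContinuousOn adjA adjB A B fun a => K a t) ∧
  ∀ a ∈ A, ∀ t ∈ Set.Icc (0 : ℤ) (z : ℤ), ∀ t' ∈ Set.Icc (0 : ℤ) (z : ℤ),
    intAdj t t' → K a t = K a t' ∨ adjB (K a t) (K a t')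

/-- `h` and `k` are digitally `(adjA, adjB)`-homotopic on `A` (into `B`). -/
def DigHomotopic {α β : Type*} (adjA : α → α → Prop) (adjB : β → β → Prop)
    (A : Set α) (B : Set β) (h k : α → β) : Prop :=
  ∃ (z : ℕ) (K : α → ℤ → β),
    IsDigHomotopy adjA adjB A B z K ∧
    (∀ a ∈ A, K a 0 = h a) ∧ (∀ a ∈ A, K a (z : ℤ) = k a)

/-- `(A, adjA)` is digitally connected: any two points of `A` are joined by a
digital path in `A` whose consecutive points are equal or adjacent. -/
def DigConnected {α : Type*} (adjA : α → α → Prop) (A : Set α) : Prop :=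
  ∀ a ∈ A, ∀ b ∈ A, ∃ (n : ℕ) (f : ℕ → α),
    f 0 = a ∧ f n = b ∧ (∀ i ≤ n, f i ∈ A) ∧
    ∀ i < n, f i = f (i + 1) ∨ adjA (f i) (f (i + 1))

/-- `adj ≥_d adj'`: `adj` dominates `adj'`. -/
def Dominates {α : Type*} (adj adj' : α → α → Prop) : Prop :=
  ∀ a a', adj a a' → adj' a a'

/-- The normal (strong) product adjacency `NP(adjA, adjB)` on a product. -/
def NP {α β : Type*} (adjA : α → α → Prop) (adjB : β → β → Prop) :
    α × β → α × β → Prop :=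
  fun x y => x ≠ y ∧ (x.1 = y.1 ∨ adjA x.1 y.1) ∧ (x.2 = y.2 ∨ adjB x.2 y.2)

/-- The normal (strong) product adjacency `NP_n(adjB, …, adjB)` on `Bⁿ`. -/
def NPn {β : Type*} (adjB : β → β → Prop) (n : ℕ) :
    (Fin n → β) → (Fin n → β) → Prop :=
  fun x y => x ≠ y ∧ ∀ i, x i = y i ∨ adjB (x i) (y i)

/-- `X` satisfies the digital `m`-homotopic-distance condition for `h, k`: every
digitally continuous map `φ` from every `m`-dimensional digital complex `(P, c_δ)`
into `X` satisfies `h ∘ φ ≃ k ∘ φ`. -/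
def DmAt {α β : Type*} (m : ℕ) (adjA : α → α → Prop) (adjB : β → β → Prop)
    (X : Set α) (B : Set β) (h k : α → β) : Prop :=
  ∀ P : Set (Fin m → ℤ), P.Finite →
    ∀ δ : ℕ, 1 ≤ δ → δ ≤ m →
      ∀ φ : (Fin m → ℤ) → α,
        DigContinuousOn (cAdj m δ) adjA P X φ →
        DigHomotopic (cAdj m δ) adjB P B (h ∘ φ) (k ∘ φ)

/-- The digital `m`-homotopic distance `D_m(h, k)` (an element of `ℕ∞`,
`⊤` if no finite decomposition exists). -/
noncomputable def Dm {α β : Type*} (m : ℕ) (adjA : α → α → Prop) (adjB : β → β → Prop)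
    (A : Set α) (B : Set β) (h k : α → β) : ℕ∞ :=
  sInf {n : ℕ∞ | ∃ q : ℕ, n = (q : ℕ∞) ∧ ∃ X : Fin (q + 1) → Set α,
    A = ⋃ j, X j ∧ ∀ j, DmAt m adjA adjB (X j) B h k}

/-- The digital homotopic distance `D(h, k)`. -/
noncomputable def Ddist {α β : Type*} (adjA : α → α → Prop) (adjB : β → β → Prop)
    (A : Set α) (B : Set β) (h k : α → β) : ℕ∞ :=
  sInf {n : ℕ∞ | ∃ q : ℕ, n = (q : ℕ∞) ∧ ∃ X : Fin (q + 1) → Set α,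
    A = ⋃ j, X j ∧ ∀ j, DigHomotopic adjA adjB (X j) B h k}

/-- `X` satisfies the digital higher `m`-homotopic-distance condition for
`h₁, …, h_n`: pushed forward along any `φ` from an `m`-dimensional digital
complex into `X`, consecutive maps become digitally homotopic. -/
def DmAtH {α β : Type*} (m : ℕ) (adjA : α → α → Prop) (adjB : β → β → Prop)
    (X : Set α) (B : Set β) {n : ℕ} (h : Fin n → α → β) : Prop :=
  ∀ P : Set (Fin m → ℤ), P.Finite →
    ∀ δ : ℕ, 1 ≤ δ → δ ≤ m →
      ∀ φ : (Fin m → ℤ) → α,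
        DigContinuousOn (cAdj m δ) adjA P X φ →
        ∀ i : Fin n, ∀ hi : (i : ℕ) + 1 < n,
          DigHomotopic (cAdj m δ) adjB P B (h i ∘ φ) (h ⟨(i : ℕ) + 1, hi⟩ ∘ φ)

/-- The digital higher `m`-homotopic distance `D_m(h₁, …, h_n)`. -/
noncomputable def DmH {α β : Type*} (m : ℕ) (adjA : α → α → Prop) (adjB : β → β → Prop)
    (A : Set α) (B : Set β) {n : ℕ} (h : Fin n → α → β) : ℕ∞ :=
  sInf {k : ℕ∞ | ∃ q : ℕ, k = (q : ℕ∞) ∧ ∃ X : Fin (q + 1) → Set α,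
    A = ⋃ j, X j ∧ ∀ j, DmAtH m adjA adjB (X j) B h}

/-- The digital higher homotopic distance `D(h₁, …, h_n)`. -/
noncomputable def DdistH {α β : Type*} (adjA : α → α → Prop) (adjB : β → β → Prop)
    (A : Set α) (B : Set β) {n : ℕ} (h : Fin n → α → β) : ℕ∞ :=
  sInf {k : ℕ∞ | ∃ q : ℕ, k = (q : ℕ∞) ∧ ∃ X : Fin (q + 1) → Set α,
    A = ⋃ j, X j ∧ ∀ j, ∀ i : Fin n, ∀ hi : (i : ℕ) + 1 < n,
      DigHomotopic adjA adjB (X j) B (h i) (h ⟨(i : ℕ) + 1, hi⟩)}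

/-- `X` satisfies the digital `m`-LS-category condition in `A`: for every `φ` from an
`m`-dimensional digital complex into `X`, the composite with the inclusion
`X ↪ A` is digitally nullhomotopic in `A`. -/
def CatmAt {α : Type*} (m : ℕ) (adjA : α → α → Prop) (X A : Set α) : Prop :=
  ∀ P : Set (Fin m → ℤ), P.Finite →
    ∀ δ : ℕ, 1 ≤ δ → δ ≤ m →
      ∀ φ : (Fin m → ℤ) → α,
        DigContinuousOn (cAdj m δ) adjA P X φ →
        ∃ a₀ ∈ A, DigHomotopic (cAdj m δ) adjA P A φ (fun _ => a₀)

/-- The digital `m`-Lusternik–Schnirelmann category `cat_m(A, adjA)`. -/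
noncomputable def Catm {α : Type*} (m : ℕ) (adjA : α → α → Prop) (A : Set α) : ℕ∞ :=
  sInf {n : ℕ∞ | ∃ q : ℕ, n = (q : ℕ∞) ∧ ∃ X : Fin (q + 1) → Set α,
    A = ⋃ j, X j ∧ ∀ j, CatmAt m adjA (X j) A}

/-- `X` satisfies the digital `m`-LS-category condition for the map `h`. -/
def CatmMapAt {α β : Type*} (m : ℕ) (adjA : α → α → Prop) (adjB : β → β → Prop)
    (X : Set α) (B : Set β) (h : α → β) : Prop :=
  ∀ P : Set (Fin m → ℤ), P.Finite →
    ∀ δ : ℕ, 1 ≤ δ → δ ≤ m →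
      ∀ φ : (Fin m → ℤ) → α,
        DigContinuousOn (cAdj m δ) adjA P X φ →
        ∃ b₀ ∈ B, DigHomotopic (cAdj m δ) adjB P B (h ∘ φ) (fun _ => b₀)

/-- The digital `m`-Lusternik–Schnirelmann category `cat_m(h; adjA, adjB)` of a map. -/
noncomputable def CatmMap {α β : Type*} (m : ℕ) (adjA : α → α → Prop) (adjB : β → β → Prop)
    (A : Set α) (B : Set β) (h : α → β) : ℕ∞ :=
  sInf {n : ℕ∞ | ∃ q : ℕ, n = (q : ℕ∞) ∧ ∃ X : Fin (q + 1) → Set α,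
    A = ⋃ j, X j ∧ ∀ j, CatmMapAt m adjA adjB (X j) B h}

/-- The digital path space `A^{[0,z]_ℤ}`: digitally `(2, adjA)`-continuous maps
`[0,z]_ℤ → A`. -/
def PathSpace {α : Type*} (adjA : α → α → Prop) (A : Set α) (z : ℕ) : Set (ℤ → α) :=
  {ϑ | DigContinuousOn intAdj adjA (Set.Icc (0 : ℤ) (z : ℤ)) A ϑ}

/-- The adjacency on the digital path space `A^{[0,z]_ℤ}`. -/
def pathAdj {α : Type*} (adjA : α → α → Prop) (z : ℕ) : (ℤ → α) → (ℤ → α) → Prop :=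
  fun ϑ θ => ∀ t ∈ Set.Icc (0 : ℤ) (z : ℤ), ∀ t' ∈ Set.Icc (0 : ℤ) (z : ℤ),
    (t = t' ∨ intAdj t t') → ϑ t = θ t' ∨ adjA (ϑ t) (θ t')

/-- The digital `m`-topological complexity `TC^m(A, adjA)`: the least `q` such
that `A × A = X_0 ∪ ⋯ ∪ X_q` where each `X_j` carries a digitally continuous
`s_j : X_j → A^{[0,z]_ℤ}` with `π ∘ s_j ∘ φ ≃ φ` for every digitally continuous
`φ : P → X_j` from every `m`-dimensional digital complex `(P, c_δ)`. -/
noncomputable def TCm {α : Type*} (m : ℕ) (adjA : α → α → Prop) (A : Set α) : ℕ∞ :=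
  sInf {n : ℕ∞ | ∃ q : ℕ, n = (q : ℕ∞) ∧ ∃ X : Fin (q + 1) → Set (α × α),
    (A ×ˢ A) = ⋃ j, X j ∧
    ∀ j, ∃ (z : ℕ) (s : α × α → ℤ → α),
      DigContinuousOn (NP adjA adjA) (pathAdj adjA z) (X j) (PathSpace adjA A z) s ∧
      ∀ P : Set (Fin m → ℤ), P.Finite →
        ∀ δ : ℕ, 1 ≤ δ → δ ≤ m →
          ∀ φ : (Fin m → ℤ) → α × α,
            DigContinuousOn (cAdj m δ) (NP adjA adjA) P (X j) φ →
            DigHomotopic (cAdj m δ) (NP adjA adjA) P (A ×ˢ A)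
              (fun x => (s (φ x) 0, s (φ x) (z : ℤ))) φ}

/-- The digital `m`-topological complexity `TC^m(h; adjA, adjB)` of a map
`h : (A, adjA) → (B, adjB)`, using `π_h(ϑ) = (ϑ(0), h(ϑ(z)))`. -/
noncomputable def TCmMap {α β : Type*} (m : ℕ) (adjA : α → α → Prop) (adjB : β → β → Prop)
    (A : Set α) (B : Set β) (h : α → β) : ℕ∞ :=
  sInf {n : ℕ∞ | ∃ q : ℕ, n = (q : ℕ∞) ∧ ∃ X : Fin (q + 1) → Set (α × β),
    (A ×ˢ B) = ⋃ j, X j ∧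
    ∀ j, ∃ (z : ℕ) (s : α × β → ℤ → α),
      DigContinuousOn (NP adjA adjB) (pathAdj adjA z) (X j) (PathSpace adjA A z) s ∧
      ∀ P : Set (Fin m → ℤ), P.Finite →
        ∀ δ : ℕ, 1 ≤ δ → δ ≤ m →
          ∀ φ : (Fin m → ℤ) → α × β,
            DigContinuousOn (cAdj m δ) (NP adjA adjB) P (X j) φ →
            DigHomotopic (cAdj m δ) (NP adjA adjB) P (A ×ˢ B)
              (fun x => (s (φ x) 0, h (s (φ x) (z : ℤ)))) φ}

/-- A digital fibration: a digitally continuous map with the digital homotopy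
lifting property with respect to every digital image `(B, c_δ) ⊆ ℤ^d`. -/
def DigitalFibration {r r' : ℕ} (p p' : ℕ) (A : Set (Fin r → ℤ)) (A' : Set (Fin r' → ℤ))
    (h : (Fin r → ℤ) → (Fin r' → ℤ)) : Prop :=
  DigContinuousOn (cAdj r p) (cAdj r' p') A A' h ∧
  ∀ (d : ℕ) (B : Set (Fin d → ℤ)) (δ : ℕ), 1 ≤ δ → δ ≤ d →
    ∀ k : (Fin d → ℤ) → (Fin r → ℤ),
      DigContinuousOn (cAdj d δ) (cAdj r p) B A k →
      ∀ (z : ℕ) (K : (Fin d → ℤ) → ℤ → (Fin r' → ℤ)),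
        IsDigHomotopy (cAdj d δ) (cAdj r' p') B A' z K →
        (∀ b ∈ B, K b 0 = h (k b)) →
        ∃ K' : (Fin d → ℤ) → ℤ → (Fin r → ℤ),
          IsDigHomotopy (cAdj d δ) (cAdj r p) B A z K' ∧
          (∀ b ∈ B, ∀ t ∈ Set.Icc (0 : ℤ) (z : ℤ), h (K' b t) = K b t) ∧
          (∀ b ∈ B, K' b 0 = k b)

/-- A digital homotopy equivalence `ω : (A, adjA) → (B, adjB)`. -/
def DigHomotopyEquiv {α β : Type*} (adjA : α → α → Prop) (adjB : β → β → Prop)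
    (A : Set α) (B : Set β) (ω : α → β) : Prop :=
  DigContinuousOn adjA adjB A B ω ∧
  ∃ ω' : β → α, DigContinuousOn adjB adjA B A ω' ∧
    DigHomotopic adjA adjA A A (ω' ∘ ω) id ∧
    DigHomotopic adjB adjB B B (ω ∘ ω') id


lemma digHomotopic_trans {α β : Type*} {adjA : α → α → Prop} {adjB : β → β → Prop}
    {A : Set α} {B : Set β} {f g k : α → β}
    (H1 : DigHomotopic adjA adjB A B f g) (H2 : DigHomotopic adjA adjB A B g k) :
    DigHomotopic adjA adjB A B f k := by
  obtain ⟨z₁, K₁, ⟨S₁, T₁⟩, h₁0, h₁z⟩ := H1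
  obtain ⟨z₂, K₂, ⟨S₂, T₂⟩, h₂0, h₂z⟩ := H2
  refine ⟨z₁ + z₂, fun a t => if t ≤ (z₁ : ℤ) then K₁ a t else K₂ a (t - z₁), ⟨?_, ?_⟩, ?_, ?_⟩
  · intro t ht
    by_cases hc : t ≤ (z₁ : ℤ)
    · simpa only [if_pos hc] using S₁ t ⟨ht.1, hc⟩
    · have ht2 : t - z₁ ∈ Set.Icc (0 : ℤ) (z₂ : ℤ) := by
        have hm := Set.mem_Icc.mp ht
        push_cast at hm
        exact Set.mem_Icc.mpr ⟨by omega, by omega⟩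
      simpa only [if_neg hc] using S₂ (t - z₁) ht2
  · intro a ha t ht t' ht' hadj
    have habs : t - t' = 1 ∨ t - t' = -1 := by
      have := hadj; unfold intAdj at this
      rcases (abs_eq (by norm_num : (0:ℤ) ≤ 1)).mp this with h | h
      · exact Or.inl h
      · exact Or.inr h
    simp only [Set.mem_Icc] at ht ht'
    push_cast at ht ht'
    by_cases hc : t ≤ (z₁ : ℤ) <;> by_cases hc' : t' ≤ (z₁ : ℤ)
    · simp only [if_pos hc, if_pos hc']
      exact T₁ a ha t ⟨ht.1, hc⟩ t' ⟨ht'.1, hc'⟩ hadj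
    · -- t ≤ z₁ < t', so t = z₁, t' = z₁ + 1
      have heq1 : t = (z₁ : ℤ) := by omega
      have heq2 : t' = (z₁ : ℤ) + 1 := by omega
      simp only [if_pos hc, if_neg hc']
      have hmid : K₁ a t = K₂ a 0 := by
        rw [heq1, h₁z a ha, ← h₂0 a ha]
      rw [hmid]
      have h1z2 : (1 : ℤ) ≤ (z₂ : ℤ) := by omega
      exact T₂ a ha 0 ⟨le_refl 0, by omega⟩ (t' - z₁) ⟨by omega, by omega⟩
        (by show |(0:ℤ) - (t' - z₁)| = 1
            rw [show (0:ℤ) - (t' - z₁) = -(t' - z₁) by ring, abs_neg,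
              show t' - (z₁:ℤ) = 1 by omega]
            norm_num)
    · have heq1 : t' = (z₁ : ℤ) := by omega
      have heq2 : t = (z₁ : ℤ) + 1 := by omega
      simp only [if_neg hc, if_pos hc']
      have hmid : K₁ a t' = K₂ a 0 := by
        rw [heq1, h₁z a ha, ← h₂0 a ha]
      rw [hmid]
      exact T₂ a ha (t - z₁) ⟨by omega, by omega⟩ 0 ⟨le_refl 0, by omega⟩
        (by show |(t - z₁) - (0:ℤ)| = 1
            rw [sub_zero, show t - (z₁:ℤ) = 1 by omega]
            norm_num)
    · simp only [if_neg hc, if_neg hc']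
      exact T₂ a ha (t - z₁) ⟨by omega, by omega⟩ (t' - z₁) ⟨by omega, by omega⟩
        (by show |(t - z₁) - (t' - z₁)| = 1
            rw [show (t - z₁) - (t' - z₁) = t - t' by ring]
            exact hadj)
  · intro a ha
    simp only [if_pos (by exact_mod_cast Nat.zero_le z₁ : (0:ℤ) ≤ (z₁:ℤ))]
    exact h₁0 a ha
  · intro a ha
    by_cases hz : z₂ = 0
    · subst hz
      simp only [Nat.add_zero, if_pos (le_refl ((z₁ : ℕ) : ℤ))]
      rw [h₁z a ha, ← h₂0 a ha]
      simpa using h₂z a ha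
    · have : ¬ ((z₁ : ℤ) + (z₂ : ℤ) ≤ (z₁ : ℤ)) := by omega
      push_cast
      rw [if_neg this]
      have : (z₁ : ℤ) + (z₂ : ℤ) - (z₁ : ℤ) = (z₂ : ℤ) := by ring
      rw [this]
      exact h₂z a ha

lemma digHomotopic_postcomp {α β γ : Type*} {adjA : α → α → Prop} {adjB : β → β → Prop}
    {adjC : γ → γ → Prop} {A : Set α} {B : Set β} {C : Set γ} {f g : α → β} {e : β → γ}
    (H : DigHomotopic adjA adjB A B f g) (he : DigContinuousOn adjB adjC B C e) :
    DigHomotopic adjA adjC A C (e ∘ f) (e ∘ g) := by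
  obtain ⟨z, K, ⟨S, T⟩, h0, hz⟩ := H
  refine ⟨z, fun a t => e (K a t), ⟨?_, ?_⟩, ?_, ?_⟩
  · intro t ht
    obtain ⟨Smem, Sadj⟩ := S t ht
    refine ⟨fun a ha => he.1 _ (Smem a ha), fun a ha a' ha' hadj => ?_⟩
    rcases Sadj a ha a' ha' hadj with heq | hb
    · exact Or.inl (congrArg e heq)
    · exact he.2 _ (Smem a ha) _ (Smem a' ha') hb
  · intro a ha t ht t' ht' hadj
    rcases T a ha t ht t' ht' hadj with heq | hb
    · exact Or.inl (congrArg e heq)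
    · exact he.2 _ ((S t ht).1 a ha) _ ((S t' ht').1 a ha) hb
  · intro a ha; simp [h0 a ha]
  · intro a ha; simp [hz a ha]

lemma digHomotopic_precomp {α β γ : Type*} {adjA : α → α → Prop} {adjB : β → β → Prop}
    {adjC : γ → γ → Prop} {A : Set α} {B : Set β} {C : Set γ} {f g : β → γ} {e : α → β}
    (H : DigHomotopic adjB adjC B C f g) (he : DigContinuousOn adjA adjB A B e) :
    DigHomotopic adjA adjC A C (f ∘ e) (g ∘ e) := by
  obtain ⟨z, K, ⟨S, T⟩, h0, hz⟩ := H
  refine ⟨z, fun a t => K (e a) t, ⟨?_, ?_⟩, ?_, ?_⟩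
  · intro t ht
    obtain ⟨Smem, Sadj⟩ := S t ht
    refine ⟨fun a ha => Smem _ (he.1 a ha), fun a ha a' ha' hadj => ?_⟩
    rcases he.2 a ha a' ha' hadj with heq | hb
    · exact Or.inl (congrArg (fun b => K b t) heq)
    · exact Sadj _ (he.1 a ha) _ (he.1 a' ha') hb
  · intro a ha t ht t' ht' hadj
    exact T _ (he.1 a ha) t ht t' ht' hadj
  · intro a ha; simp [h0 _ (he.1 a ha)]
  · intro a ha; simp [hz _ (he.1 a ha)]

/-- `D_m(α₁∘h₁, …, α_n∘h_n) ≤ D_m(h₁,…,h_n)` provided that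
`α_i ≃ α_{i+1}` for every `i`. -/
theorem dmh_postcompose {r s u p q w : ℕ} {n : ℕ}
    (hp1 : 1 ≤ p) (hpr : p ≤ r) (hq1 : 1 ≤ q) (hqs : q ≤ s) (hw1 : 1 ≤ w) (hwu : w ≤ u)
    (A : Set (Fin r → ℤ)) (B : Set (Fin s → ℤ)) (C : Set (Fin u → ℤ))
    (h : Fin n → (Fin r → ℤ) → (Fin s → ℤ))
    (α : Fin n → (Fin s → ℤ) → (Fin u → ℤ))
    (hcont : ∀ i, DigContinuousOn (cAdj r p) (cAdj s q) A B (h i))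
    (αcont : ∀ i, DigContinuousOn (cAdj s q) (cAdj u w) B C (α i))
    (hα : ∀ i : Fin n, ∀ hi : (i : ℕ) + 1 < n,
      DigHomotopic (cAdj s q) (cAdj u w) B C (α i) (α ⟨(i : ℕ) + 1, hi⟩))
    (m : ℕ) (hm : 0 < m) :
    DmH m (cAdj r p) (cAdj u w) A C (fun i => α i ∘ h i)
      ≤ DmH m (cAdj r p) (cAdj s q) A B h := by
  apply sInf_le_sInf
  rintro k ⟨Q, rfl, X, hcov, hX⟩
  refine ⟨Q, rfl, X, hcov, fun j => ?_⟩
  intro P Pfin δ hδ1 hδm φ φcont i hi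
  have hXA : X j ⊆ A := by rw [hcov]; exact Set.subset_iUnion X j
  have φA : DigContinuousOn (cAdj m δ) (cAdj r p) P A φ :=
    ⟨fun a ha => hXA (φcont.1 a ha), φcont.2⟩
  have hψ : DigContinuousOn (cAdj m δ) (cAdj s q) P B (h ⟨(i : ℕ) + 1, hi⟩ ∘ φ) := by
    refine ⟨fun a ha => (hcont _).1 _ (φA.1 a ha), fun a ha a' ha' hadj => ?_⟩
    rcases φA.2 a ha a' ha' hadj with heq | hb
    · exact Or.inl (by simp [Function.comp, heq])
    · exact (hcont _).2 _ (φA.1 a ha) _ (φA.1 a' ha') hb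
  have H1 : DigHomotopic (cAdj m δ) (cAdj s q) P B (h i ∘ φ) (h ⟨(i : ℕ) + 1, hi⟩ ∘ φ) :=
    hX j P Pfin δ hδ1 hδm φ φcont i hi
  have H2 : DigHomotopic (cAdj m δ) (cAdj u w) P C
      (α i ∘ (h i ∘ φ)) (α i ∘ (h ⟨(i : ℕ) + 1, hi⟩ ∘ φ)) :=
    digHomotopic_postcomp H1 (αcont i)
  have H3 : DigHomotopic (cAdj m δ) (cAdj u w) P C
      (α i ∘ (h ⟨(i : ℕ) + 1, hi⟩ ∘ φ)) (α ⟨(i : ℕ) + 1, hi⟩ ∘ (h ⟨(i : ℕ) + 1, hi⟩ ∘ φ)) :=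
    digHomotopic_precomp (hα i hi) hψ
  exact digHomotopic_trans H2 H3

end DigitalTop
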